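/- Let n ≥ 1 and let φ : ℂⁿ → ℝ be Lipschitz with constant 1. There exists a constant C > 0 (depending only on n) such that for every integer k ≥ 1, every function v : ℂⁿ → ℂ of class C¹, and every p ∈ ℂⁿ: |v(p)|·e^{−kφ(p)} ≤ C·( k^{−2} · sup_{z ∈ B̄(p, 1/k²)} ( ‖∂̄v(z)‖·e^{−kφ(z)} ) + k^{2n} · (∫_{B(p,1/k²)} |v|²·e^{−2kφ} dλ)^{1/2} ). -/

import Mathlib

/-!
For fixed `p`, `w` and `t ≠ 0`, the derivative of `θ ↦ v (p + t e^{iθ} w)` is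
`t i (Dv(e^{iθ} w) - 2 ∂̄v(e^{iθ} w))`; since the circle is closed, the integral of
`Dv(e^{iθ} w)` over it equals twice that of `∂̄v(e^{iθ} w)`. Integrating along the rays from `p`,
the mean of `v` over the circle `p + e^{iθ} w` differs from `v p` by at most
`2 ‖w‖ sup ‖∂̄v‖`. Averaging over `w` in the ball, which is invariant under the rotations
`z ↦ p + e^{iθ} (z - p)`, gives `|v p| ≤ ⨍_{B̄(p,ε)} |v| + 2 ε sup_{B̄(p,ε)} ‖∂̄v‖`.

On `B̄(p, 1/k²)` the weight `kφ` varies by at most `1/k ≤ 1`, so moving it inside the mean costs a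
factor `e`, and Cauchy–Schwarz with `vol B̄(p,ε) = ε^{2n} vol B(0,1)` bounds the mean by
`k^{2n} (∫ |v|² e^{-2kφ})^{1/2}` up to a constant.
-/

open MeasureTheory Metric Real

noncomputable instance (n : ℕ) : MeasurableSpace (EuclideanSpace ℂ (Fin n)) := borel _

instance (n : ℕ) : BorelSpace (EuclideanSpace ℂ (Fin n)) := ⟨rfl⟩

/-- Lebesgue measure on `ℂⁿ ≅ ℝ^{2n}`. -/
noncomputable instance (n : ℕ) : MeasureSpace (EuclideanSpace ℂ (Fin n)) :=
  letI : InnerProductSpace ℝ (EuclideanSpace ℂ (Fin n)) := InnerProductSpace.rclikeToReal ℂ _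
  measureSpaceOfInnerProductSpace

/-- The (0,1)-part of the real derivative of `v : ℂⁿ → ℂ` at `z`, as an ℝ-linear map:
`∂̄v(z)(w) = ½( Dv(z)(w) + i·Dv(z)(i·w) )`. -/
noncomputable def dbar {n : ℕ} (v : EuclideanSpace ℂ (Fin n) → ℂ)
    (z : EuclideanSpace ℂ (Fin n)) : EuclideanSpace ℂ (Fin n) →L[ℝ] ℂ :=
  (1 / 2 : ℝ) • (fderiv ℝ v z +
    (ContinuousLinearMap.restrictScalars ℝ
        ((Complex.I : ℂ) • ContinuousLinearMap.id ℂ ℂ)).comp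
      ((fderiv ℝ v z).comp
        (ContinuousLinearMap.restrictScalars ℝ
          ((Complex.I : ℂ) • ContinuousLinearMap.id ℂ (EuclideanSpace ℂ (Fin n))))))

theorem Continuous.integrable_prod_restrict {α β G : Type*} [TopologicalSpace α] [T2Space α]
    [MeasurableSpace α] [OpensMeasurableSpace α] [TopologicalSpace β] [T2Space β]
    [SecondCountableTopology β] [MeasurableSpace β] [OpensMeasurableSpace β]
    [NormedAddCommGroup G] {μ : Measure α} {ν : Measure β} [IsFiniteMeasureOnCompacts μ]
    [IsFiniteMeasureOnCompacts ν] [SFinite μ] [SFinite ν] {f : α × β → G} (hf : Continuous f)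
    {s : Set α} {t : Set β} (hs : IsCompact s) (ht : IsCompact t) :
    Integrable f ((μ.restrict s).prod (ν.restrict t)) := by
  rw [Measure.prod_restrict]
  exact hf.continuousOn.integrableOn_compact (hs.prod ht)

theorem Continuous.integrableOn_closedBall {X G : Type*} [MetricSpace X] [ProperSpace X]
    [MeasurableSpace X] [OpensMeasurableSpace X] [NormedAddCommGroup G] {μ : Measure X}
    [IsFiniteMeasureOnCompacts μ] {f : X → G} (hf : Continuous f) (x : X) (r : ℝ) :
    IntegrableOn f (closedBall x r) μ :=
  hf.continuousOn.integrableOn_compact (isCompact_closedBall x r)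

theorem le_biSup_of_bddAbove_image {α β : Type*} [ConditionallyCompleteLattice β] {f : α → β}
    {s : Set α} (hf : BddAbove (f '' s)) {x : α} (hx : x ∈ s) : f x ≤ ⨆ z ∈ s, f z := by
  refine le_ciSup₂ (f := fun z (_ : z ∈ s) => f z) ?_ x hx
  convert hf using 1
  ext y
  simp

theorem setAverage_le_sqrt_setAverage_sq {α : Type*} [MeasurableSpace α] {μ : Measure α}
    {s : Set α} {f : α → ℝ} (hs₀ : μ s ≠ 0) (hs : μ s ≠ ⊤) (hf : IntegrableOn f s μ)
    (hf₂ : IntegrableOn (fun x => f x ^ 2) s μ) :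
    ⨍ x in s, f x ∂μ ≤ √(⨍ x in s, f x ^ 2 ∂μ) :=
  (le_abs_self _).trans <| Real.abs_le_sqrt <| even_two.convexOn_pow.map_set_average_le
    (continuous_pow 2).continuousOn isClosed_univ hs₀ hs (by simp) hf hf₂

section

variable {E F : Type*} [NormedAddCommGroup E] [NormedSpace ℝ E]
  [NormedAddCommGroup F] [NormedSpace ℝ F] [CompleteSpace F]

theorem integral_fderiv_apply_deriv_eq_sub {v : E → F} (hv : ContDiff ℝ 1 v) {γ γ' : ℝ → E}
    (hγ : ∀ t, HasDerivAt γ (γ' t) t) (hγ' : Continuous γ') (a b : ℝ) :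
    ∫ t in a..b, fderiv ℝ v (γ t) (γ' t) = v (γ b) - v (γ a) := by
  have hγc : Continuous γ := continuous_iff_continuousAt.2 fun t => (hγ t).continuousAt
  refine intervalIntegral.integral_eq_sub_of_hasDerivAt (f := v ∘ γ) (fun t _ => ?_) ?_
  · exact (hv.differentiable one_ne_zero (γ t)).hasFDerivAt.comp_hasDerivAt t (hγ t)
  · exact (((hv.continuous_fderiv one_ne_zero).comp hγc).clm_apply hγ').intervalIntegrable _ _

theorem sub_eq_integral_fderiv_segment {v : E → F} (hv : ContDiff ℝ 1 v) (p x : E) :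
    v (p + x) - v p = ∫ s in (0 : ℝ)..1, fderiv ℝ v (p + s • x) x := by
  have h := integral_fderiv_apply_deriv_eq_sub hv (γ := fun s : ℝ => p + s • x)
    (fun s => ((hasDerivAt_id s).smul_const x).const_add p |>.congr_deriv (one_smul ℝ x))
    continuous_const 0 1
  simpa using h.symm

end

section Rotation

variable {V : Type*} [NormedAddCommGroup V] [NormedSpace ℂ V]

noncomputable def LinearIsometryEquiv.smulOfNormEqOne (a : ℂ) (ha : ‖a‖ = 1) : V ≃ₗᵢ[ℝ] V where
  toLinearEquiv :=
    (LinearEquiv.smulOfNeZero ℂ V a (norm_ne_zero_iff.1 (by simp [ha]))).restrictScalars ℝ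
  norm_map' z := by simp [norm_smul, ha]

theorem norm_circleMap_smul (θ : ℝ) (w : V) : ‖circleMap 0 1 θ • w‖ = ‖w‖ := by
  rw [norm_smul, norm_circleMap_zero, abs_one, one_mul]

end Rotation

section

open Set

variable {n : ℕ}

local notation "ℂⁿ" => EuclideanSpace ℂ (Fin n)

theorem dbar_apply (v : ℂⁿ → ℂ) (z y : ℂⁿ) :
    dbar v z y = (1 / 2 : ℂ) * (fderiv ℝ v z y + Complex.I * fderiv ℝ v z (Complex.I • y)) := by
  simp [dbar, Complex.real_smul, mul_add]

theorem fderiv_apply_I_smul (v : ℂⁿ → ℂ) (z y : ℂⁿ) :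
    fderiv ℝ v z (Complex.I • y) = Complex.I * (fderiv ℝ v z y - 2 * dbar v z y) := by
  rw [dbar_apply]
  linear_combination (fderiv ℝ v z (Complex.I • y)) * Complex.I_sq

theorem continuous_dbar {v : ℂⁿ → ℂ} (hv : ContDiff ℝ 1 v) : Continuous (dbar v) := by
  have := hv.continuous_fderiv one_ne_zero
  unfold dbar
  fun_prop

theorem integral_fderiv_circle_eq_two_mul_integral_dbar {v : ℂⁿ → ℂ} (hv : ContDiff ℝ 1 v)
    (p w : ℂⁿ) {t : ℝ} (ht : t ≠ 0) :
    ∫ θ in (0 : ℝ)..2 * π, fderiv ℝ v (p + t • circleMap 0 1 θ • w) (circleMap 0 1 θ • w) =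
      2 * ∫ θ in (0 : ℝ)..2 * π, dbar v (p + t • circleMap 0 1 θ • w) (circleMap 0 1 θ • w) := by
  set γ : ℝ → ℂⁿ := fun θ => p + t • circleMap 0 1 θ • w
  set F : ℝ → ℂ := fun θ => fderiv ℝ v (γ θ) (circleMap 0 1 θ • w)
  set G : ℝ → ℂ := fun θ => dbar v (γ θ) (circleMap 0 1 θ • w)
  have hγ : ∀ θ, HasDerivAt γ (t • Complex.I • circleMap 0 1 θ • w) θ := fun θ => by
    have := (((hasDerivAt_circleMap 0 1 θ).smul_const w).const_smul t).const_add p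
    rwa [mul_comm, mul_smul] at this
  have hloop := integral_fderiv_apply_deriv_eq_sub hv hγ (by fun_prop) 0 (2 * π)
  have hper : γ (2 * π) = γ 0 := by simp only [γ, (periodic_circleMap 0 1).eq]
  have hFG : ∀ θ, fderiv ℝ v (γ θ) (t • Complex.I • circleMap 0 1 θ • w) =
      (t * Complex.I) * (F θ - 2 * G θ) := fun θ => by
    rw [map_smul, fderiv_apply_I_smul, Complex.real_smul, mul_assoc]
  have hF : Continuous F := ((hv.continuous_fderiv one_ne_zero).comp (by fun_prop)).clm_apply
    (by fun_prop)
  have hG : Continuous G := ((continuous_dbar hv).comp (by fun_prop)).clm_apply (by fun_prop)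
  simp_rw [hFG, hper, sub_self] at hloop
  rw [intervalIntegral.integral_const_mul, intervalIntegral.integral_sub
    (hF.intervalIntegrable _ _) ((hG.const_mul 2).intervalIntegrable _ _),
    intervalIntegral.integral_const_mul] at hloop
  have htI : (t * Complex.I : ℂ) ≠ 0 := mul_ne_zero (Complex.ofReal_ne_zero.2 ht) Complex.I_ne_zero
  exact sub_eq_zero.1 ((mul_eq_zero.1 hloop).resolve_left htI)

theorem norm_integral_circle_sub_le {v : ℂⁿ → ℂ} (hv : ContDiff ℝ 1 v) (p w : ℂⁿ) {K : ℝ}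
    (hK : ∀ x ∈ closedBall p ‖w‖, ‖dbar v x‖ ≤ K) :
    ‖∫ θ in Icc 0 (2 * π), (v (p + circleMap 0 1 θ • w) - v p)‖ ≤ 4 * π * K * ‖w‖ := by
  set F : ℝ → ℝ → ℂ := fun θ s => fderiv ℝ v (p + s • circleMap 0 1 θ • w) (circleMap 0 1 θ • w)
  have hseg : ∀ θ, v (p + circleMap 0 1 θ • w) - v p = ∫ s in Icc 0 1, F θ s := fun θ => by
    rw [sub_eq_integral_fderiv_segment hv, intervalIntegral.integral_of_le zero_le_one,
      integral_Icc_eq_integral_Ioc]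
  have hF : Continuous (Function.uncurry F) :=
    ((hv.continuous_fderiv one_ne_zero).comp (by fun_prop)).clm_apply (by fun_prop)
  have hmem : ∀ θ, ∀ s ∈ Icc (0 : ℝ) 1, p + s • circleMap 0 1 θ • w ∈ closedBall p ‖w‖ := by
    intro θ s hs
    rw [mem_closedBall, dist_self_add_left, norm_smul, norm_circleMap_smul,
      Real.norm_of_nonneg hs.1]
    exact mul_le_of_le_one_left (norm_nonneg w) hs.2
  have hinner : ∀ s ∈ Icc (0 : ℝ) 1, s ≠ 0 →
      ‖∫ θ in Icc 0 (2 * π), F θ s‖ ≤ 4 * π * K * ‖w‖ := by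
    intro s hs hs0
    have hG : ∀ θ ∈ Ioc 0 (2 * π),
        ‖dbar v (p + s • circleMap 0 1 θ • w) (circleMap 0 1 θ • w)‖ ≤ K * ‖w‖ := fun θ _ => by
      simpa only [norm_circleMap_smul] using
        (dbar v _).le_of_opNorm_le (hK _ (hmem θ s hs)) (circleMap 0 1 θ • w)
    rw [integral_Icc_eq_integral_Ioc, ← intervalIntegral.integral_of_le two_pi_pos.le,
      integral_fderiv_circle_eq_two_mul_integral_dbar hv p w hs0, norm_mul, Complex.norm_two,
      intervalIntegral.integral_of_le two_pi_pos.le]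
    calc 2 * ‖∫ θ in Ioc 0 (2 * π), dbar v (p + s • circleMap 0 1 θ • w) (circleMap 0 1 θ • w)‖
        ≤ 2 * (K * ‖w‖ * volume.real (Ioc 0 (2 * π))) := by
          gcongr; exact norm_setIntegral_le_of_norm_le_const measure_Ioc_lt_top hG
      _ = 4 * π * K * ‖w‖ := by rw [Real.volume_real_Ioc_of_le two_pi_pos.le]; ring
  calc ‖∫ θ in Icc 0 (2 * π), (v (p + circleMap 0 1 θ • w) - v p)‖
      = ‖∫ s in Icc 0 1, ∫ θ in Icc 0 (2 * π), F θ s‖ := by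
        simp_rw [hseg]
        rw [integral_integral_swap (hF.integrable_prod_restrict isCompact_Icc isCompact_Icc)]
    _ ≤ 4 * π * K * ‖w‖ * volume.real (Icc (0 : ℝ) 1) := by
        refine norm_setIntegral_le_of_norm_le_const_ae' measure_Icc_lt_top ?_
        filter_upwards [Measure.ae_ne volume 0] with s hs0 hs using hinner s hs hs0
    _ = 4 * π * K * ‖w‖ := by simp

theorem setIntegral_closedBall_comp_rotate {G : Type*} [NormedAddCommGroup G] [NormedSpace ℝ G]
    (p : ℂⁿ) {a : ℂ} (ha : ‖a‖ = 1) (r : ℝ) (f : ℂⁿ → G) :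
    ∫ z in closedBall p r, f (p + a • (z - p)) = ∫ z in closedBall p r, f z := by
  -- the real inner product from which `volume` on `ℂⁿ` is built
  let _ : InnerProductSpace ℝ ℂⁿ := InnerProductSpace.rclikeToReal ℂ _
  set e := LinearIsometryEquiv.smulOfNormEqOne (V := ℂⁿ) a ha
  have hrot : (fun z : ℂⁿ => p + a • (z - p)) = fun z => (p - a • p) + e z := by
    funext z
    change p + a • (z - p) = p - a • p + a • z
    rw [smul_sub]; abel
  have hmp : MeasurePreserving (fun z : ℂⁿ => p + a • (z - p)) := by
    rw [hrot]; exact (measurePreserving_add_left volume (p - a • p)).comp e.measurePreserving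
  have hemb : MeasurableEmbedding (fun z : ℂⁿ => p + a • (z - p)) := by
    rw [hrot]; exact (e.toHomeomorph.trans (Homeomorph.addLeft (p - a • p))).measurableEmbedding
  have hpre : (fun z : ℂⁿ => p + a • (z - p)) ⁻¹' closedBall p r = closedBall p r := by
    ext z; simp [dist_eq_norm, norm_smul, ha]
  rw [← hmp.setIntegral_preimage_emb hemb f, hpre]

theorem integral_closedBall_integral_circle {f : ℂⁿ → ℝ} (hf : Continuous f) (p : ℂⁿ) (r : ℝ) :
    ∫ z in closedBall p r, ∫ θ in Icc 0 (2 * π), f (p + circleMap 0 1 θ • (z - p)) =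
      2 * π * ∫ z in closedBall p r, f z := by
  have hcont : Continuous (Function.uncurry fun θ z => f (p + circleMap 0 1 θ • (z - p))) := by
    fun_prop
  rw [← integral_integral_swap (hcont.integrable_prod_restrict isCompact_Icc
    (isCompact_closedBall p r))]
  simp_rw [setIntegral_closedBall_comp_rotate p (by simp : ‖circleMap 0 1 _‖ = 1) r f]
  rw [setIntegral_const, Real.volume_real_Icc_of_le two_pi_pos.le, smul_eq_mul, sub_zero]

theorem two_pi_mul_norm_le_integral_circle_add {v : ℂⁿ → ℂ} (hv : ContDiff ℝ 1 v) (p w : ℂⁿ)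
    {K : ℝ} (hK : ∀ x ∈ closedBall p ‖w‖, ‖dbar v x‖ ≤ K) :
    2 * π * ‖v p‖ ≤ (∫ θ in Icc 0 (2 * π), ‖v (p + circleMap 0 1 θ • w)‖) + 4 * π * K * ‖w‖ := by
  have hcirc := norm_integral_circle_sub_le hv p w hK
  rw [integral_sub (Continuous.integrableOn_Icc (by fun_prop)) (integrable_const (v p)),
    setIntegral_const, Real.volume_real_Icc_of_le two_pi_pos.le, sub_zero] at hcirc
  calc 2 * π * ‖v p‖ = ‖(2 * π) • v p‖ := by rw [norm_smul, Real.norm_of_nonneg two_pi_pos.le]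
    _ ≤ ‖∫ θ in Icc 0 (2 * π), v (p + circleMap 0 1 θ • w)‖ + 4 * π * K * ‖w‖ :=
      (norm_le_insert _ _).trans (add_le_add_right hcirc _)
    _ ≤ (∫ θ in Icc 0 (2 * π), ‖v (p + circleMap 0 1 θ • w)‖) + 4 * π * K * ‖w‖ := by
      gcongr; exact norm_integral_le_integral_norm _

theorem norm_le_setAverage_add_of_norm_dbar_le {v : ℂⁿ → ℂ} (hv : ContDiff ℝ 1 v) (p : ℂⁿ)
    {ε K : ℝ} (hε : 0 < ε) (hK : ∀ x ∈ closedBall p ε, ‖dbar v x‖ ≤ K) :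
    ‖v p‖ ≤ (⨍ z in closedBall p ε, ‖v z‖) + 2 * K * ε := by
  have hK0 : 0 ≤ K := (norm_nonneg _).trans (hK p (mem_closedBall_self hε.le))
  have hg : ∀ z ∈ closedBall p ε, 2 * π * (‖v p‖ - 2 * K * ε) ≤
      ∫ θ in Icc 0 (2 * π), ‖v (p + circleMap 0 1 θ • (z - p))‖ := by
    intro z hz
    have hzp : ‖z - p‖ ≤ ε := mem_closedBall_iff_norm.1 hz
    have := two_pi_mul_norm_le_integral_circle_add hv p (z - p)
      fun x hx => hK x (closedBall_subset_closedBall hzp hx)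
    nlinarith [pi_pos, mul_le_mul_of_nonneg_left hzp hK0]
  have hg_cont : Continuous fun z =>
      ∫ θ in Icc 0 (2 * π), ‖v (p + circleMap 0 1 θ • (z - p))‖ :=
    continuous_parametric_integral_of_continuous (by fun_prop) isCompact_Icc
  have hV : 0 < volume.real (closedBall p ε) :=
    ENNReal.toReal_pos (measure_closedBall_pos volume p hε).ne' measure_closedBall_lt_top.ne
  have hint := setIntegral_mono_on (integrableOn_const (μ := volume) measure_closedBall_lt_top.ne)
    (hg_cont.integrableOn_closedBall p ε) measurableSet_closedBall hg
  rw [setIntegral_const, smul_eq_mul, integral_closedBall_integral_circle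
    (f := fun x => ‖v x‖) (by fun_prop) p ε] at hint
  rw [setAverage_eq, smul_eq_mul, ← sub_le_iff_le_add, le_inv_mul_iff₀ hV]
  nlinarith [pi_pos]

theorem norm_mul_exp_neg_le_of_dbar {v : ℂⁿ → ℂ} (hv : ContDiff ℝ 1 v) {ψ : ℂⁿ → ℝ}
    (hψ : Continuous ψ) (p : ℂⁿ) {ε a M : ℝ} (hε : 0 < ε)
    (hψa : ∀ x ∈ closedBall p ε, ψ x ≤ ψ p + a)
    (hM : ∀ x ∈ closedBall p ε, ‖dbar v x‖ * exp (-ψ x) ≤ M) :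
    ‖v p‖ * exp (-ψ p) ≤
      exp a * (2 * ε * M + ⨍ x in closedBall p ε, ‖v x‖ * exp (-ψ x)) := by
  have hM0 : 0 ≤ M := (by positivity : (0 : ℝ) ≤ _).trans (hM p (mem_closedBall_self hε.le))
  have hK : ∀ x ∈ closedBall p ε, ‖dbar v x‖ ≤ exp (ψ p + a) * M := fun x hx =>
    calc ‖dbar v x‖ = ‖dbar v x‖ * exp (-ψ x) * exp (ψ x) := by
          rw [mul_assoc, ← exp_add, neg_add_cancel, exp_zero, mul_one]
      _ ≤ M * exp (ψ p + a) := by gcongr; exacts [hM x hx, hψa x hx]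
      _ = exp (ψ p + a) * M := mul_comm _ _
  have hweight : ∀ x ∈ closedBall p ε, ‖v x‖ * exp (-ψ p) ≤ exp a * (‖v x‖ * exp (-ψ x)) :=
    fun x hx => by
      rw [mul_left_comm, ← exp_add]
      gcongr
      linarith [hψa x hx]
  have havg : (⨍ x in closedBall p ε, ‖v x‖) * exp (-ψ p) ≤
      exp a * ⨍ x in closedBall p ε, ‖v x‖ * exp (-ψ x) := by
    simp only [setAverage_eq, smul_eq_mul]
    rw [mul_assoc, mul_left_comm (exp a), ← integral_mul_const (exp (-ψ p)),
      ← integral_const_mul (exp a)]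
    have hvc := hv.continuous
    exact mul_le_mul_of_nonneg_left (setIntegral_mono_on
      (Continuous.integrableOn_closedBall (μ := volume) (by fun_prop) p ε)
      (Continuous.integrableOn_closedBall (by fun_prop) p ε)
      measurableSet_closedBall hweight) (by positivity)
  calc ‖v p‖ * exp (-ψ p)
      ≤ ((⨍ x in closedBall p ε, ‖v x‖) + 2 * (exp (ψ p + a) * M) * ε) * exp (-ψ p) := by
        gcongr; exact norm_le_setAverage_add_of_norm_dbar_le hv p hε hK
    _ = (⨍ x in closedBall p ε, ‖v x‖) * exp (-ψ p) + exp a * (2 * ε * M) := by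
        rw [exp_add, exp_neg]; field_simp
    _ ≤ exp a * (2 * ε * M + ⨍ x in closedBall p ε, ‖v x‖ * exp (-ψ x)) := by
        linarith

theorem setAverage_closedBall_le {f : ℂⁿ → ℝ} (hf : Continuous f) (p : ℂⁿ) {r : ℝ} (hr : 0 < r) :
    ⨍ x in closedBall p r, f x ≤
      √(∫ x in ball p r, f x ^ 2) / (r ^ n * √(volume.real (ball (0 : ℂⁿ) 1))) := by
  have hV : volume.real (closedBall p r) = (r ^ n) ^ 2 * volume.real (ball (0 : ℂⁿ) 1) := by
    rw [Measure.addHaar_real_closedBall volume p hr.le, finrank_real_of_complex,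
      finrank_euclideanSpace_fin, ← pow_mul, mul_comm n 2]
  have hae : closedBall p r =ᵐ[volume] ball p r := by
    refine ae_eq_set.2 ⟨?_, by rw [sdiff_eq_empty.2 ball_subset_closedBall, measure_empty]⟩
    rw [closedBall_sdiff_ball]
    exact Measure.addHaar_sphere_of_ne_zero volume p hr.ne'
  calc ⨍ x in closedBall p r, f x ≤ √(⨍ x in closedBall p r, f x ^ 2) :=
        setAverage_le_sqrt_setAverage_sq (measure_closedBall_pos volume p hr).ne'
          measure_closedBall_lt_top.ne (hf.integrableOn_closedBall p r)
          ((hf.pow 2).integrableOn_closedBall p r)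
    _ = √(∫ x in ball p r, f x ^ 2) / (r ^ n * √(volume.real (ball (0 : ℂⁿ) 1))) := by
        rw [setAverage_eq, smul_eq_mul, hV, setIntegral_congr_set hae, ← div_eq_inv_mul,
          Real.sqrt_div' _ (by positivity), Real.sqrt_mul' _ measureReal_nonneg,
          Real.sqrt_sq (by positivity)]

theorem norm_mul_exp_neg_le_sqrt_integral {v : ℂⁿ → ℂ} (hv : ContDiff ℝ 1 v) {ψ : ℂⁿ → ℝ}
    (hψ : Continuous ψ) (p : ℂⁿ) {ε a : ℝ} (hε : 0 < ε)
    (hψa : ∀ x ∈ closedBall p ε, ψ x ≤ ψ p + a) :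
    ‖v p‖ * exp (-ψ p) ≤ exp a * (2 + (√(volume.real (ball (0 : ℂⁿ) 1)))⁻¹) *
      (ε * (⨆ z ∈ closedBall p ε, ‖dbar v z‖ * exp (-ψ z)) +
        (ε ^ n)⁻¹ * √(∫ x in ball p ε, (‖v x‖ * exp (-ψ x)) ^ 2)) := by
  set c := √(volume.real (ball (0 : ℂⁿ) 1))
  set M := ⨆ z ∈ closedBall p ε, ‖dbar v z‖ * exp (-ψ z)
  set J := √(∫ x in ball p ε, (‖v x‖ * exp (-ψ x)) ^ 2)
  have hvc := hv.continuous
  have hdbar := continuous_dbar hv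
  have hsup : ∀ x ∈ closedBall p ε, ‖dbar v x‖ * exp (-ψ x) ≤ M := fun x hx =>
    le_biSup_of_bddAbove_image (f := fun z => ‖dbar v z‖ * exp (-ψ z))
      ((isCompact_closedBall p ε).bddAbove_image (Continuous.continuousOn (by fun_prop))) hx
  have hM : 0 ≤ ε * M :=
    mul_nonneg hε.le ((by positivity : (0 : ℝ) ≤ _).trans (hsup p (mem_closedBall_self hε.le)))
  have hJ : 0 ≤ (ε ^ n)⁻¹ * J := by positivity
  have havg : ⨍ x in closedBall p ε, ‖v x‖ * exp (-ψ x) ≤ J / (ε ^ n * c) :=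
    setAverage_closedBall_le (by fun_prop) p hε
  calc ‖v p‖ * exp (-ψ p) ≤ exp a * (2 * (ε * M) + c⁻¹ * ((ε ^ n)⁻¹ * J)) := by
        refine (norm_mul_exp_neg_le_of_dbar hv hψ p hε hψa hsup).trans ?_
        rw [← mul_assoc]
        gcongr
        exact havg.trans_eq (by ring)
    _ ≤ exp a * (2 + c⁻¹) * (ε * M + (ε ^ n)⁻¹ * J) := by
        rw [mul_assoc]
        gcongr
        nlinarith [mul_nonneg (inv_nonneg.2 (Real.sqrt_nonneg _) : 0 ≤ c⁻¹) hM]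

end

theorem weighted_pointwise_dbar_estimate_general (n : ℕ)
    (φ : EuclideanSpace ℂ (Fin n) → ℝ) (hφ : LipschitzWith 1 φ) :
    ∃ C > 0, ∀ k : ℕ, 1 ≤ k →
      ∀ v : EuclideanSpace ℂ (Fin n) → ℂ, ContDiff ℝ 1 v →
        ∀ p : EuclideanSpace ℂ (Fin n),
          ‖v p‖ * Real.exp (-(k : ℝ) * φ p) ≤
            C * ((k : ℝ) ^ (-2 : ℝ) *
                (⨆ z ∈ closedBall p (1 / (k : ℝ) ^ 2),
                  ‖dbar v z‖ * Real.exp (-(k : ℝ) * φ z)) +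
              (k : ℝ) ^ (2 * n) *
                (∫ z in ball p (1 / (k : ℝ) ^ 2),
                  ‖v z‖ ^ 2 * Real.exp (-2 * (k : ℝ) * φ z)) ^ (1/2 : ℝ)) := by
  refine ⟨exp 1 * (2 + (√(volume.real (ball (0 : EuclideanSpace ℂ (Fin n)) 1)))⁻¹),
    by positivity, fun k hk v hv p => ?_⟩
  have hk1 : (1 : ℝ) ≤ k := by exact_mod_cast hk
  set ε : ℝ := 1 / (k : ℝ) ^ 2 with hε_def
  have hε : 0 < ε := by positivity
  have hkε : (k : ℝ) * ε ≤ 1 := by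
    rw [hε_def, mul_one_div, div_le_one (by positivity)]; nlinarith
  have hweight : ∀ x ∈ closedBall p ε, k * φ x ≤ k * φ p + 1 := fun x hx => by
    have hφx := hφ.le_add_mul x p
    rw [NNReal.coe_one, one_mul] at hφx
    nlinarith [mem_closedBall.1 hx]
  have hsq : ∀ x, (‖v x‖ * exp (-(k * φ x))) ^ 2 = ‖v x‖ ^ 2 * exp (-(2 * k * φ x)) := fun x => by
    rw [mul_pow, sq (exp _), ← exp_add]; ring_nf
  have hpow : (k : ℝ) ^ (2 * n) = (ε ^ n)⁻¹ := by rw [hε_def, ← inv_pow, one_div, inv_inv, pow_mul]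
  have hrpow : (k : ℝ) ^ (-2 : ℝ) = ε := by
    rw [hε_def, Real.rpow_neg (by positivity), one_div, Real.rpow_two]
  simp only [neg_mul, hrpow, hpow, ← Real.sqrt_eq_rpow]
  simpa only [hsq] using norm_mul_exp_neg_le_sqrt_integral hv (by have := hφ.continuous; fun_prop)
    p hε hweight

/-- Weighted pointwise estimate with weight `e^{−kφ}`, `φ` 1-Lipschitz, at scale `ε = 1/k²`:
`|v(p)|e^{−kφ(p)} ≤ C( k^{−2}·sup_{B̄(p,1/k²)} ‖∂̄v‖e^{−kφ} + k^{2n}·(∫_{B(p,1/k²)} |v|²e^{−2kφ} dλ)^{1/2} )`. -/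
theorem weighted_pointwise_dbar_estimate (n : ℕ) (hn : 1 ≤ n)
    (φ : EuclideanSpace ℂ (Fin n) → ℝ) (hφ : LipschitzWith 1 φ) :
    ∃ C > 0, ∀ k : ℕ, 1 ≤ k →
      ∀ v : EuclideanSpace ℂ (Fin n) → ℂ, ContDiff ℝ 1 v →
        ∀ p : EuclideanSpace ℂ (Fin n),
          ‖v p‖ * Real.exp (-(k : ℝ) * φ p) ≤
            C * ((k : ℝ) ^ (-2 : ℝ) *
                (⨆ z ∈ closedBall p (1 / (k : ℝ) ^ 2),
                  ‖dbar v z‖ * Real.exp (-(k : ℝ) * φ z)) +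
              (k : ℝ) ^ (2 * n) *
                (∫ z in ball p (1 / (k : ℝ) ^ 2),
                  ‖v z‖ ^ 2 * Real.exp (-2 * (k : ℝ) * φ z)) ^ (1/2 : ℝ)) :=
  weighted_pointwise_dbar_estimate_general n φ hφ
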